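/- arXiv:math/0006017 — 8 statements merged into one kernel-verified Lean document; each statement's English description precedes it below -/
import Mathlib

section
/- True count theorem (A. J. M'Hall): Let 1 ≤ n < N. Then the average of the true count after removing n cards, taken over all n-element subsets of the deck, equals the true count before removing: (1 / binom(N,n)) · ∑_{S ⊆ α, |S| = n} T_S = T. Equivalently, ∑_{S ∈ powersetCard n α} T_S = binom(N,n) · T. -/
/-!
Swap the two sums: a card `a` lies outside exactly `binom(N-1, n)` of the `n`-subsets, so
`∑_S ∑_{a ∉ S} c a = binom(N-1, n) ∑_a c a`, and `binom(N-1, n) · N = binom(N, n) · (N - n)`.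
-/

theorem Nat.choose_pred_mul (N n : ℕ) : (N - 1).choose n * N = N.choose n * (N - n) := by
  cases N with
  | zero => simp
  | succ N => exact Nat.choose_mul_succ_eq N n

namespace Finset

variable {α : Type*} [DecidableEq α]

theorem filter_notMem_powersetCard (s : Finset α) (n : ℕ) (a : α) :
    {S ∈ s.powersetCard n | a ∉ S} = (s.erase a).powersetCard n := by
  ext S
  simp only [mem_filter, mem_powersetCard, subset_erase]
  tauto

theorem sum_powersetCard_sum_sdiff {M : Type*} [AddCommMonoid M] (s : Finset α) (n : ℕ)
    (f : α → M) :
    ∑ S ∈ s.powersetCard n, ∑ a ∈ s \ S, f a = (#s - 1).choose n • ∑ a ∈ s, f a := by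
  calc ∑ S ∈ s.powersetCard n, ∑ a ∈ s \ S, f a
      = ∑ a ∈ s, ∑ S ∈ s.powersetCard n with a ∉ S, f a := by
        rw [sum_comm']
        intro S a
        simp only [mem_sdiff, mem_filter]
        tauto
    _ = ∑ a ∈ s, (#s - 1).choose n • f a := by
        refine sum_congr rfl fun a ha => ?_
        rw [sum_const, filter_notMem_powersetCard, card_powersetCard, card_erase_of_mem ha]
    _ = (#s - 1).choose n • ∑ a ∈ s, f a := (smul_sum ..).symm

end Finset

theorem true_count_theorem_general {α : Type*} [Fintype α] [DecidableEq α]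
    (c : α → ℝ) (n : ℕ) (hnN : n < Fintype.card α) :
    ∑ S ∈ Finset.powersetCard n (Finset.univ : Finset α),
        (-(∑ a ∈ Finset.univ \ S, c a) / ((Fintype.card α : ℝ) - n))
      = ((Fintype.card α).choose n : ℝ) *
          (-(∑ a, c a) / (Fintype.card α : ℝ)) := by
  set N := Fintype.card α
  have hN : (N : ℝ) ≠ 0 := Nat.cast_ne_zero.mpr (Nat.ne_zero_of_lt hnN)
  have hNn : (N : ℝ) - n ≠ 0 := sub_ne_zero.mpr (by exact_mod_cast hnN.ne')
  have hchoose : ((N - 1).choose n : ℝ) * N = N.choose n * ((N : ℝ) - n) := by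
    rw [← Nat.cast_sub hnN.le]
    exact_mod_cast Nat.choose_pred_mul N n
  rw [← Finset.sum_div, Finset.sum_neg_distrib, Finset.sum_powersetCard_sum_sdiff,
    Finset.card_univ, nsmul_eq_mul]
  field_simp
  linear_combination (-∑ a, c a) * hchoose

/-- **True count theorem (A. J. M'Hall).**
A deck is a finite set `α` of `N = Fintype.card α` cards with weight function `c : α → ℝ`.
The running count is `R = -∑ a, c a` and the true count is `T = R / N`.
For a subset `S` of cards removed, the true count after removing `S` is
`T_S = -(∑ a ∈ Sᶜ, c a) / (N - |S|)`.
For `1 ≤ n < N`, the sum of `T_S` over all `n`-element subsets `S` equals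
`binom(N, n) · T`; i.e. the average of the true count after removing `n` cards equals
the true count before removing them. -/
theorem true_count_theorem {α : Type*} [Fintype α] [DecidableEq α]
    (c : α → ℝ) (n : ℕ) (hn : 1 ≤ n) (hnN : n < Fintype.card α) :
    ∑ S ∈ Finset.powersetCard n (Finset.univ : Finset α),
        (-(∑ a ∈ Finset.univ \ S, c a) / ((Fintype.card α : ℝ) - n))
      = ((Fintype.card α).choose n : ℝ) *
          (-(∑ a, c a) / (Fintype.card α : ℝ)) :=
  true_count_theorem_general c n hnN
end

section
/- True count standard deviation formula: Let N ≥ 2 and 1 ≤ n < N. Then the variance of the true count after removing n uniformly random cards satisfies σ_n² = ((N−1)/(N−n)) · n · σ₁²; equivalently σ_n = √((N−1)/(N−n)) · √n · σ₁. -/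
/-!
Write `d a = c a - μ` for the deviations from the mean weight `μ`, so that `∑ d = 0` and
`T_S - T = (∑_{a ∈ S} d a) / (N - n)`. Since `∑_{a ∉ S} d a = -∑_{a ∈ S} d a`, the square
`(∑_{a ∈ S} d a)²` equals `-∑_{a ∈ S, b ∉ S} d a d b`. An ordered pair `a ≠ b` is split this
way by `binom(N-2, n-1)` of the `n`-subsets (the other `n - 1` members of `S` avoid `a` and `b`),
and `∑_{a ≠ b} d a d b = -∑ d a²`, so `∑_{|S| = n} (∑_{a ∈ S} d a)² = binom(N-2, n-1) ∑ d a²`.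
Hence `σ_n² = n / (N (N-1) (N-n)) · ∑ d a²`, and the formula follows by comparing with `n = 1`.
-/

/-- The variance `σ_n²` of the true count of the deck `(α, c)` after removing `n`
uniformly random cards: the deck has `N = Fintype.card α` cards, running count
`R = -∑ a, c a`, true count `T = R/N`, and for a removed subset `S` of size `n`
the new true count is `T_S = -(∑ a ∈ Sᶜ, c a)/(N - n)`; then
`σ_n² = (1 / binom(N,n)) · ∑_{|S| = n} (T_S - T)²`. -/
noncomputable def trueCountVar {α : Type*} [Fintype α] [DecidableEq α]
    (c : α → ℝ) (n : ℕ) : ℝ :=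
  (1 / ((Fintype.card α).choose n : ℝ)) *
    ∑ S ∈ Finset.powersetCard n (Finset.univ : Finset α),
      ((-(∑ a ∈ Finset.univ \ S, c a) / ((Fintype.card α : ℝ) - n))
        - (-(∑ a, c a) / (Fintype.card α : ℝ)))^2

open Finset

theorem Nat.add_two_choose_add_one_mul_mul_sub (m k : ℕ) :
    (m + 2).choose (k + 1) * (k + 1) * (m + 1 - k) = (m + 2) * (m + 1) * m.choose k := by
  rw [← Nat.add_one_mul_choose_eq, mul_assoc, ← Nat.choose_mul_succ_eq]
  ring

theorem Nat.cast_choose_mul_mul_sub {R : Type*} [CommRing R] {N n : ℕ} (hn : 1 ≤ n)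
    (hnN : n < N) :
    (N.choose n : R) * n * (N - n) = N * (N - 1) * (N - 2).choose (n - 1) := by
  obtain ⟨m, rfl⟩ : ∃ m, N = m + 2 := ⟨N - 2, by omega⟩
  obtain ⟨k, rfl⟩ : ∃ k, n = k + 1 := ⟨n - 1, by omega⟩
  have h := congrArg (Nat.cast : ℕ → R) (Nat.add_two_choose_add_one_mul_mul_sub m k)
  push_cast [Nat.cast_sub (by omega : k ≤ m + 1)] at h
  simp only [Nat.add_sub_cancel, Nat.cast_add, Nat.cast_ofNat, Nat.cast_one]
  linear_combination h

namespace Finset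

variable {α : Type*} [DecidableEq α]

theorem card_filter_powersetCard_mem_notMem {s : Finset α} {a b : α} (ha : a ∈ s) (hb : b ∈ s)
    (hab : a ≠ b) {n : ℕ} (hn : 1 ≤ n) :
    #{S ∈ s.powersetCard n | a ∈ S ∧ b ∉ S} = (#s - 2).choose (n - 1) := by
  have hfilter : {S ∈ s.powersetCard n | a ∈ S ∧ b ∉ S}
      = {S ∈ (s.erase b).powersetCard n | {a} ⊆ S} := by
    ext S
    simp only [mem_filter, mem_powersetCard, subset_erase, singleton_subset_iff]
    tauto
  rw [hfilter, card_filter_powersetCard_subset _ _ _ (by simpa using ⟨hab, ha⟩) (by simpa),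
    card_erase_of_mem hb, card_singleton, Nat.sub_sub]

theorem sum_offDiag_mul {R : Type*} [CommRing R] (s : Finset α) (f : α → R) :
    ∑ p ∈ s.offDiag, f p.1 * f p.2 = (∑ a ∈ s, f a) ^ 2 - ∑ a ∈ s, f a ^ 2 := by
  rw [sq, sum_mul_sum, ← sum_product', ← diag_union_offDiag, sum_union (disjoint_diag_offDiag _),
    sum_diag]
  simp only [sq, add_sub_cancel_left]

theorem sum_powersetCard_sq_sum_of_sum_eq_zero {R : Type*} [CommRing R] {s : Finset α}
    {d : α → R} (hd : ∑ a ∈ s, d a = 0) {n : ℕ} (hn : 1 ≤ n) :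
    ∑ S ∈ s.powersetCard n, (∑ a ∈ S, d a) ^ 2 = (#s - 2).choose (n - 1) * ∑ a ∈ s, d a ^ 2 := by
  have hsq : ∀ S ∈ s.powersetCard n,
      (∑ a ∈ S, d a) ^ 2 = -∑ p ∈ S ×ˢ (s \ S), d p.1 * d p.2 := by
    intro S hS
    have hcompl : ∑ b ∈ s \ S, d b = -∑ a ∈ S, d a := by
      rw [sum_sdiff_eq_sub (mem_powersetCard.1 hS).1, hd, zero_sub]
    rw [sum_product, ← sum_mul_sum, hcompl]
    ring
  calc ∑ S ∈ s.powersetCard n, (∑ a ∈ S, d a) ^ 2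
      = -∑ p ∈ s.offDiag, ∑ S ∈ s.powersetCard n with p.1 ∈ S ∧ p.2 ∉ S, d p.1 * d p.2 := by
        rw [sum_congr rfl hsq, sum_neg_distrib, sum_comm']
        intro S p
        simp only [mem_product, mem_sdiff, mem_filter, mem_offDiag, mem_powersetCard]
        grind
    _ = -∑ p ∈ s.offDiag, ((#s - 2).choose (n - 1) : R) * (d p.1 * d p.2) := by
        congr 1
        refine sum_congr rfl fun p hp => ?_
        obtain ⟨h1, h2, h12⟩ := mem_offDiag.1 hp
        rw [sum_const, card_filter_powersetCard_mem_notMem h1 h2 h12 hn, nsmul_eq_mul]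
    _ = (#s - 2).choose (n - 1) * ∑ a ∈ s, d a ^ 2 := by
        rw [← mul_sum, sum_offDiag_mul, hd]
        ring

end Finset

theorem trueCountVar_eq {α : Type*} [Fintype α] [DecidableEq α] (c : α → ℝ) {n : ℕ}
    (hn : 1 ≤ n) (hnN : n < Fintype.card α) :
    trueCountVar c n = n / (Fintype.card α * (Fintype.card α - 1) * (Fintype.card α - n)) *
      ∑ a, (c a - (∑ x, c x) / Fintype.card α) ^ 2 := by
  set N := Fintype.card α with hNdef
  set d : α → ℝ := fun a => c a - (∑ x, c x) / N
  have hN : (N : ℝ) ≠ 0 := by exact_mod_cast (Nat.zero_lt_of_lt hnN).ne'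
  have hN1 : (N : ℝ) - 1 ≠ 0 := sub_ne_zero.2 (by exact_mod_cast (hn.trans_lt hnN).ne')
  have hNn : (N : ℝ) - n ≠ 0 := sub_ne_zero.2 (by exact_mod_cast hnN.ne')
  have hd : ∑ a, d a = 0 := by
    simp only [d, sum_sub_distrib, sum_const, card_univ, nsmul_eq_mul]
    field_simp
    ring
  have hdev : ∀ S ∈ univ.powersetCard n,
      -(∑ a ∈ univ \ S, c a) / (N - n) - -(∑ a, c a) / N = (∑ a ∈ S, d a) / (N - n) := by
    intro S hS
    rw [sum_sdiff_eq_sub (subset_univ S)]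
    simp only [d, sum_sub_distrib, sum_const, (mem_powersetCard.1 hS).2, nsmul_eq_mul]
    field_simp
    ring
  have hchoose := Nat.cast_choose_mul_mul_sub (R := ℝ) hn hnN
  have hC : (N.choose n : ℝ) ≠ 0 := by exact_mod_cast (Nat.choose_pos hnN.le).ne'
  unfold trueCountVar
  rw [sum_congr rfl fun S hS => by rw [hdev S hS, div_pow], ← sum_div,
    sum_powersetCard_sq_sum_of_sum_eq_zero hd hn, card_univ, ← hNdef]
  change _ = _ * ∑ a, d a ^ 2
  field_simp
  linear_combination (-∑ a, d a ^ 2) * hchoose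

theorem true_count_sd_formula_general {α : Type*} [Fintype α] [DecidableEq α]
    (c : α → ℝ) (n : ℕ)
    (hn : 1 ≤ n) (hnN : n < Fintype.card α) :
    trueCountVar c n
      = (((Fintype.card α : ℝ) - 1) / ((Fintype.card α : ℝ) - n)) * n *
          trueCountVar c 1 := by
  have hN : (Fintype.card α : ℝ) ≠ 0 := by exact_mod_cast (Nat.zero_lt_of_lt hnN).ne'
  have hN1 : (Fintype.card α : ℝ) - 1 ≠ 0 := sub_ne_zero.2 (by exact_mod_cast (hn.trans_lt hnN).ne')
  have hNn : (Fintype.card α : ℝ) - n ≠ 0 := sub_ne_zero.2 (by exact_mod_cast hnN.ne')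
  rw [trueCountVar_eq c hn hnN, trueCountVar_eq c le_rfl (hn.trans_lt hnN)]
  generalize ∑ a, (c a - (∑ x, c x) / Fintype.card α) ^ 2 = Q
  rw [Nat.cast_one]
  field_simp

/-- **True count standard deviation formula.** For a deck of `N ≥ 2` cards and
`1 ≤ n < N`, the variance of the true count after removing `n` uniformly random
cards satisfies `σ_n² = ((N-1)/(N-n)) · n · σ₁²`. -/
theorem true_count_sd_formula {α : Type*} [Fintype α] [DecidableEq α]
    (c : α → ℝ) (n : ℕ) (hN : 2 ≤ Fintype.card α)
    (hn : 1 ≤ n) (hnN : n < Fintype.card α) :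
    trueCountVar c n
      = (((Fintype.card α : ℝ) - 1) / ((Fintype.card α : ℝ) - n)) * n *
          trueCountVar c 1 :=
  true_count_sd_formula_general c n hn hnN
end

section
/- Corollary 1: If σ₁ > 0, then the standard deviation σ_n of the true count after removing n cards is strictly increasing in n: for all n with 1 ≤ n and n + 1 < N one has σ_{n+1} > σ_n (equivalently σ_{n+1}² > σ_n²). -/
section Aux
open Finset
variable {α : Type*} [DecidableEq α]

lemma card_powersetCard_filter_subset (u t : Finset α) (htu : t ⊆ u) {n : ℕ}
    (htn : t.card ≤ n) :
    ((u.powersetCard n).filter (fun S => t ⊆ S)).card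
      = (u.card - t.card).choose (n - t.card) := by
  rw [← card_sdiff_of_subset htu, ← card_powersetCard (n - t.card) (u \ t)]
  apply Finset.card_bij' (fun S _ => S \ t) (fun A _ => A ∪ t)
  · intro S hS
    simp only [mem_filter, mem_powersetCard] at hS
    simp only [mem_powersetCard]
    exact ⟨sdiff_subset_sdiff hS.1.1 le_rfl, by rw [card_sdiff_of_subset hS.2, hS.1.2]⟩
  · intro A hA
    simp only [mem_powersetCard] at hA
    have hdisj : Disjoint A t := (subset_sdiff.mp hA.1).2
    simp only [mem_filter, mem_powersetCard]
    refine ⟨⟨union_subset ((subset_sdiff.mp hA.1).1.trans (by simp)) htu, ?_⟩, subset_union_right⟩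
    rw [card_union_of_disjoint hdisj, hA.2, Nat.sub_add_cancel htn]
  · intro S hS
    simp only [mem_filter] at hS
    exact sdiff_union_of_subset hS.2
  · intro A hA
    simp only [mem_powersetCard] at hA
    exact union_sdiff_cancel_right (subset_sdiff.mp hA.1).2

lemma sum_powersetCard_sq [Fintype α] (f : α → ℝ) (hf : ∑ a, f a = 0) {n : ℕ}
    (hn : 1 ≤ n) (hN : n < Fintype.card α) :
    ∑ S ∈ powersetCard n (univ : Finset α), (∑ a ∈ S, f a) ^ 2
      = ((Fintype.card α - 2).choose (n - 1) : ℝ) * ∑ a, (f a) ^ 2 := by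
  classical
  set N := Fintype.card α with hNdef
  -- the two counting constants
  set k1 : ℝ := ((N - 1).choose (n - 1) : ℝ) with hk1
  set k2 : ℝ := (if 2 ≤ n then (((N - 2).choose (n - 2) : ℕ) : ℝ) else 0) with hk2
  have count : ∀ a b : α,
      (((powersetCard n (univ : Finset α)).filter (fun S => a ∈ S ∧ b ∈ S)).card : ℝ)
        = if a = b then k1 else k2 := by
    intro a b
    by_cases hab : a = b
    · subst hab
      have heq : ((powersetCard n (univ : Finset α)).filter (fun S => a ∈ S ∧ a ∈ S))
          = ((powersetCard n (univ : Finset α)).filter (fun S => ({a} : Finset α) ⊆ S)) :=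
        filter_congr (by simp)
      rw [if_pos rfl, heq,
        card_powersetCard_filter_subset _ _ (by simp) (by simpa using hn), hk1]
      simp [card_univ]
      rfl
    · rw [if_neg hab]
      have hiff : ∀ S : Finset α, (a ∈ S ∧ b ∈ S) ↔ ({a, b} : Finset α) ⊆ S := by
        intro S; simp [insert_subset_iff]
      have hcardab : ({a, b} : Finset α).card = 2 := card_pair hab
      by_cases h2 : 2 ≤ n
      · have heq : ((powersetCard n (univ : Finset α)).filter (fun S => a ∈ S ∧ b ∈ S))
            = ((powersetCard n (univ : Finset α)).filter (fun S => ({a, b} : Finset α) ⊆ S)) :=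
          filter_congr (fun S _ => by simpa using hiff S)
        rw [heq, card_powersetCard_filter_subset _ _ (by simp) (by rw [hcardab]; exact h2)]
        rw [hk2, if_pos h2, hcardab, card_univ]
      · have hn1 : n = 1 := by omega
        have : ((powersetCard n (univ : Finset α)).filter (fun S => a ∈ S ∧ b ∈ S)) = ∅ := by
          rw [eq_empty_iff_forall_notMem]
          intro S hS
          simp only [mem_filter, mem_powersetCard] at hS
          have := card_le_card ((hiff S).mp hS.2)
          omega
        rw [this, hk2, if_neg h2]
        simp
  -- expand squares into indicator double sums and swap
  have expand : ∀ S : Finset α, (∑ a ∈ S, f a) ^ 2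
      = ∑ a : α, ∑ b : α, (if a ∈ S ∧ b ∈ S then f a * f b else 0) := by
    intro S
    rw [sq, Finset.sum_mul_sum]
    have h1 : ∀ a : α, (∑ b : α, if a ∈ S ∧ b ∈ S then f a * f b else 0)
        = if a ∈ S then ∑ b ∈ S, f a * f b else 0 := by
      intro a
      by_cases ha : a ∈ S
      · simp [ha, Finset.sum_ite_mem]
      · simp [ha]
    rw [Finset.sum_congr rfl fun a _ => h1 a]
    simp [Finset.sum_ite_mem]
  calc
    ∑ S ∈ powersetCard n (univ : Finset α), (∑ a ∈ S, f a) ^ 2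
        = ∑ S ∈ powersetCard n (univ : Finset α), ∑ a : α, ∑ b : α,
            (if a ∈ S ∧ b ∈ S then f a * f b else 0) :=
      Finset.sum_congr rfl fun S _ => expand S
    _ = ∑ a : α, ∑ b : α, ∑ S ∈ powersetCard n (univ : Finset α),
            (if a ∈ S ∧ b ∈ S then f a * f b else 0) := by
      rw [Finset.sum_comm]
      exact Finset.sum_congr rfl fun a _ => Finset.sum_comm
    _ = ∑ a : α, ∑ b : α, f a * f b * (if a = b then k1 else k2) := by
      refine Finset.sum_congr rfl fun a _ => Finset.sum_congr rfl fun b _ => ?_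
      rw [← Finset.sum_filter, Finset.sum_const, nsmul_eq_mul, ← count a b, mul_comm]
    _ = ∑ a : α, (f a * f a * k1 + ∑ b ∈ univ.erase a, f a * f b * k2) := by
      refine Finset.sum_congr rfl fun a _ => ?_
      rw [← Finset.add_sum_erase _ _ (mem_univ a), if_pos rfl]
      congr 1
      refine Finset.sum_congr rfl fun b hb => ?_
      rw [if_neg (Ne.symm (mem_erase.mp hb).1)]
    _ = k1 * (∑ a, (f a) ^ 2) + k2 * (-(∑ a, (f a) ^ 2)) := by
      rw [Finset.sum_add_distrib]
      congr 1
      · rw [Finset.mul_sum]; exact Finset.sum_congr rfl fun a _ => by ring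
      · have key : ∀ a : α, ∑ b ∈ univ.erase a, f a * f b * k2 = k2 * -(f a ^ 2) := by
          intro a
          have h3 : ∑ b ∈ univ.erase a, f b = -f a := by
            rw [Finset.sum_erase_eq_sub (mem_univ a), hf]; ring
          calc ∑ b ∈ univ.erase a, f a * f b * k2
              = (∑ b ∈ univ.erase a, f b) * (f a * k2) := by
                rw [Finset.sum_mul]
                exact Finset.sum_congr rfl fun b _ => by ring
            _ = k2 * -(f a ^ 2) := by rw [h3]; ring
        rw [Finset.sum_congr rfl fun a _ => key a, ← Finset.mul_sum]
        congr 1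
        rw [Finset.sum_neg_distrib]
    _ = ((N - 2).choose (n - 1) : ℝ) * ∑ a, (f a) ^ 2 := by
      have hcast : k1 - k2 = ((N - 2).choose (n - 1) : ℝ) := by
        by_cases h2 : 2 ≤ n
        · rw [hk1, hk2, if_pos h2]
          have hN2 : 2 ≤ N := by omega
          have : (N - 1).choose (n - 1) = (N - 2).choose (n - 2) + (N - 2).choose (n - 1) := by
            have e1 : N - 1 = (N - 2) + 1 := by omega
            have e2 : n - 1 = (n - 2) + 1 := by omega
            rw [e1, e2, Nat.choose_succ_succ]
          rw [this]
          push_cast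
          ring
        · have hn1 : n = 1 := by omega
          subst hn1
          rw [hk1, hk2, if_neg h2]
          simp
      rw [← hcast]; ring

lemma choose_id (N n : ℕ) (hn : 1 ≤ n) (hN : n < N) :
    N.choose n * n * (N - n) = N * (N - 1) * (N - 2).choose (n - 1) := by
  have h1 : N.choose n * n = N * (N - 1).choose (n - 1) := by
    have := Nat.add_one_mul_choose_eq (N - 1) (n - 1)
    have e : (n - 1).succ = n := by omega
    rw [Nat.sub_add_cancel (by omega)] at this
    rw [show n - 1 + 1 = n from e] at this
    omega
  have h2 : (N - 1).choose (n - 1) * (N - n) = (N - 1) * (N - 2).choose (n - 1) := by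
    have := Nat.choose_mul_succ_eq (N - 2) (n - 1)
    have e1 : N - 2 + 1 = N - 1 := by omega
    have e2 : N - 1 - (n - 1) = N - n := by omega
    rw [e1, e2, mul_comm ((N - 2).choose (n - 1)) (N - 1)] at this
    omega
  calc N.choose n * n * (N - n) = N * ((N - 1).choose (n - 1) * (N - n)) := by rw [h1]; ring
    _ = N * (N - 1) * (N - 2).choose (n - 1) := by rw [h2]; ring


lemma trueCountVar_formula {α : Type*} [Fintype α] [DecidableEq α] (c : α → ℝ) {n : ℕ}
    (hn : 1 ≤ n) (hN : n < Fintype.card α) :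
    trueCountVar c n
      = (∑ a, (c a - (∑ b, c b) / (Fintype.card α : ℝ)) ^ 2) * n
          / ((Fintype.card α : ℝ) * ((Fintype.card α : ℝ) - 1) * ((Fintype.card α : ℝ) - n)) := by
  classical
  set N := Fintype.card α with hNdef
  have hN2 : 2 ≤ N := by omega
  have hN0 : (0 : ℝ) < N := by
    have : (0 : ℕ) < N := by omega
    exact_mod_cast this
  have hN1 : (1 : ℝ) < N := by
    have : (1 : ℕ) < N := by omega
    exact_mod_cast this
  have hNn : (0 : ℝ) < (N : ℝ) - n := by
    have : (n : ℝ) < N := by exact_mod_cast hN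
    linarith
  set f : α → ℝ := fun a => c a - (∑ b, c b) / N with hfdef
  have hf : ∑ a, f a = 0 := by
    simp only [hfdef, Finset.sum_sub_distrib, Finset.sum_const, card_univ, ← hNdef,
      nsmul_eq_mul]
    field_simp
    ring
  have step : ∀ S ∈ powersetCard n (univ : Finset α),
      ((-(∑ a ∈ univ \ S, c a) / ((N : ℝ) - n)) - (-(∑ a, c a) / (N : ℝ))) ^ 2
        = (∑ a ∈ S, f a) ^ 2 / ((N : ℝ) - n) ^ 2 := by
    intro S hS
    obtain ⟨hsub, hcard⟩ := mem_powersetCard.mp hS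
    have h1 : ∑ a ∈ univ \ S, c a = (∑ a, c a) - ∑ a ∈ S, c a :=
      Finset.sum_sdiff_eq_sub hsub
    have h2 : ∑ a ∈ S, f a = (∑ a ∈ S, c a) - n * ((∑ b, c b) / N) := by
      simp [hfdef, Finset.sum_sub_distrib, hcard]
    rw [h1, h2]
    field_simp
    ring
  have hC : (0 : ℝ) < (N.choose n : ℝ) := by
    exact_mod_cast Nat.choose_pos hN.le
  have hcast : ((N.choose n : ℝ)) * n * ((N : ℝ) - n)
      = (N : ℝ) * ((N : ℝ) - 1) * ((N - 2).choose (n - 1) : ℝ) := by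
    have := choose_id N n hn hN
    have e1 : ((N - n : ℕ) : ℝ) = (N : ℝ) - n := by
      push_cast [Nat.cast_sub hN.le]; ring
    have e2 : ((N - 1 : ℕ) : ℝ) = (N : ℝ) - 1 := by
      push_cast [Nat.cast_sub (by omega : 1 ≤ N)]; ring
    calc ((N.choose n : ℝ)) * n * ((N : ℝ) - n)
        = ((N.choose n * n * (N - n) : ℕ) : ℝ) := by push_cast [e1]; ring
      _ = ((N * (N - 1) * (N - 2).choose (n - 1) : ℕ) : ℝ) := by rw [this]
      _ = (N : ℝ) * ((N : ℝ) - 1) * ((N - 2).choose (n - 1) : ℝ) := by push_cast [e2]; ring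
  rw [trueCountVar, ← hNdef, Finset.sum_congr rfl step, ← Finset.sum_div,
    sum_powersetCard_sq f hf hn hN]
  simp only [← hNdef]
  set D := ∑ a, (f a) ^ 2 with hDdef
  have hne2 : ((N : ℝ) - n) ^ 2 ≠ 0 := pow_ne_zero _ (ne_of_gt hNn)
  have hne3 : (N : ℝ) * ((N : ℝ) - 1) * ((N : ℝ) - n) ≠ 0 :=
    ne_of_gt (mul_pos (mul_pos hN0 (by linarith)) hNn)
  rw [one_div, inv_mul_eq_div, div_div, div_eq_div_iff (mul_ne_zero hne2 (ne_of_gt hC)) hne3]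
  linear_combination (-(D * ((N : ℝ) - n))) * hcast

end Aux

open Finset in
/-- **Corollary 1.** If `σ₁ > 0` (equivalently `σ₁² > 0`), then the standard
deviation of the true count after removing `n` cards is strictly increasing in `n`:
for all `n` with `1 ≤ n` and `n + 1 < N` one has `σ_{n+1}² > σ_n²`
(equivalently `σ_{n+1} > σ_n`). -/
theorem trueCountVar_strict_mono {α : Type*} [Fintype α] [DecidableEq α]
    (c : α → ℝ) (hσ : 0 < trueCountVar c 1)
    (n : ℕ) (hn : 1 ≤ n) (hnN : n + 1 < Fintype.card α) :
    trueCountVar c n < trueCountVar c (n + 1) := by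
  classical
  set N := Fintype.card α with hNdef
  have hN3 : 3 ≤ N := by omega
  have hN0 : (0 : ℝ) < N := by
    have : (0 : ℕ) < N := by omega
    exact_mod_cast this
  have hN1 : (1 : ℝ) < N := by
    have : (1 : ℕ) < N := by omega
    exact_mod_cast this
  have hNn1 : (0 : ℝ) < (N : ℝ) - (n + 1) := by
    have : ((n + 1 : ℕ) : ℝ) < N := by exact_mod_cast hnN
    push_cast at this ⊢; linarith
  have hNn : (0 : ℝ) < (N : ℝ) - n := by linarith
  set D := ∑ a, (c a - (∑ b, c b) / (N : ℝ)) ^ 2 with hDdef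
  have h1 : trueCountVar c 1 = D * 1 / ((N : ℝ) * ((N : ℝ) - 1) * ((N : ℝ) - 1)) := by
    rw [trueCountVar_formula c le_rfl (by omega), ← hNdef]
    norm_num
    rfl
  have hD : 0 < D := by
    rw [h1] at hσ
    have hden : (0 : ℝ) < (N : ℝ) * ((N : ℝ) - 1) * ((N : ℝ) - 1) := by
      apply mul_pos (mul_pos hN0 (by linarith)); linarith
    by_contra hle
    push_neg at hle
    have : D * 1 / ((N : ℝ) * ((N : ℝ) - 1) * ((N : ℝ) - 1)) ≤ 0 :=
      div_nonpos_of_nonpos_of_nonneg (by linarith) hden.le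
    linarith
  rw [trueCountVar_formula c hn (by omega), trueCountVar_formula c (by omega) hnN, ← hNdef,
    ← hDdef]
  push_cast
  rw [div_lt_div_iff₀ (mul_pos (mul_pos hN0 (by linarith)) hNn)
    (mul_pos (mul_pos hN0 (by linarith)) (by push_cast at hNn1 ⊢; linarith))]
  nlinarith [mul_pos (mul_pos hD (mul_pos hN0 hN0)) (show (0:ℝ) < (N:ℝ) - 1 by linarith)]
end

section
/- Lemma 2 (true count algebra): Let p ≥ 0 and q ≥ 0 with p + q ≤ N − 2, let s = (w_1,…,w_p) be a sequence of elements of W, and let v₀,…,v_q ∈ W. Then, as an identity of integers, ∑_{w∈W} l^s(w) · ∏_{j=0}^{q} l^{s·(v₀,…,v_{j−1})·w}(v_j) = (N − p − q − 1) · ∏_{j=0}^{q} l^{s·(v₀,…,v_{j−1})}(v_j). -/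
/-- The depleted count: `l^s(v) = l(v) - #{i : s_i = v}`, the number of cards of
weight `v` remaining once the sequence `s` of cards has been removed from a deck
whose count function is `l`. -/
def depletedCount {W : Type*} [DecidableEq W] (l : W → ℤ) (s : List W) (v : W) : ℤ :=
  l v - s.count v

section
variable {W : Type*} [Fintype W] [DecidableEq W]

private lemma sum_count' (s : List W) : ∑ w : W, (s.count w : ℤ) = s.length := by
  induction s with
  | nil => simp
  | cons a t ih =>
    simp only [List.count_cons, List.length_cons]
    push_cast
    rw [Finset.sum_add_distrib, ih]
    simp [Finset.sum_ite_eq]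

private lemma sum_depleted' (l : W → ℤ) (s : List W) :
    ∑ w, depletedCount l s w = (∑ w, l w) - s.length := by
  simp [depletedCount, Finset.sum_sub_distrib, sum_count']

omit [Fintype W] in
private lemma depleted_snoc' (l : W → ℤ) (t : List W) (w u : W) :
    depletedCount l (t ++ [w]) u = depletedCount l t u - (if w = u then 1 else 0) := by
  simp only [depletedCount, List.count_append, List.count_singleton']
  split_ifs with h <;> simp_all [beq_iff_eq] <;> ring

private lemma prefix_succ' {q : ℕ} (s : List W) (v : Fin (q + 2) → W) (j : Fin (q + 1)) :
    s ++ (List.ofFn v).take ↑j.succ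
      = (s ++ [v 0]) ++ (List.ofFn (fun i => v i.succ)).take ↑j := by
  rw [List.ofFn_succ]
  simp [Fin.val_succ, List.take_succ_cons]

private lemma aux_main (l : W → ℤ) :
    ∀ (q : ℕ) (s : List W) (v : Fin (q + 1) → W),
      ∑ w, depletedCount l s w *
          ∏ j : Fin (q + 1),
            depletedCount l (s ++ (List.ofFn v).take j ++ [w]) (v j)
        = ((∑ w, l w) - s.length - q - 1) *
            ∏ j : Fin (q + 1), depletedCount l (s ++ (List.ofFn v).take j) (v j) := by
  intro q
  induction q with
  | zero =>
    intro s v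
    simp only [Fin.prod_univ_succ, Fin.prod_univ_zero, mul_one, Fin.val_zero,
      List.take_zero, List.append_nil, depleted_snoc', Nat.cast_zero]
    have : ∀ w : W, depletedCount l s w *
        (depletedCount l s (v 0) - if w = v 0 then 1 else 0)
        = depletedCount l s w * depletedCount l s (v 0)
          - (if w = v 0 then depletedCount l s (v 0) else 0) := by
      intro w; split_ifs with h <;> subst_eqs <;> ring
    rw [Finset.sum_congr rfl fun w _ => this w, Finset.sum_sub_distrib,
      ← Finset.sum_mul, sum_depleted', Finset.sum_ite_eq' Finset.univ (v 0)]
    simp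
    ring
  | succ q ih =>
    intro s v
    set v' : Fin (q + 1) → W := fun i => v i.succ with hv'
    set s' : List W := s ++ [v 0] with hs'
    have key : ∀ w : W,
        depletedCount l s w *
          ∏ j : Fin (q + 2), depletedCount l (s ++ (List.ofFn v).take j ++ [w]) (v j)
        = depletedCount l s (v 0) *
          (depletedCount l s' w *
            ∏ j : Fin (q + 1), depletedCount l (s' ++ (List.ofFn v').take j ++ [w]) (v' j)) := by
      intro w
      rw [Fin.prod_univ_succ]
      have hpre : ∀ j : Fin (q + 1),
          s ++ (List.ofFn v).take ↑j.succ ++ [w] = s' ++ (List.ofFn v').take ↑j ++ [w] := by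
        intro j; rw [prefix_succ' s v j]
      simp only [hpre]
      have h0 : depletedCount l (s ++ (List.ofFn v).take ↑(0 : Fin (q + 2)) ++ [w]) (v 0)
          = depletedCount l s (v 0) - (if w = v 0 then 1 else 0) := by
        simp [depleted_snoc']
      rw [h0]
      have hs'w : depletedCount l s' w
          = depletedCount l s w - (if v 0 = w then 1 else 0) := by
        rw [hs', depleted_snoc']
      rw [hs'w]
      by_cases h : w = v 0
      · subst h; rfl
      · rw [if_neg h, if_neg (Ne.symm h)]; ring
    rw [Finset.sum_congr rfl fun w _ => key w, ← Finset.mul_sum, ih s' v']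
    have hlen : (s'.length : ℤ) = s.length + 1 := by simp [hs']
    have hprod : ∏ j : Fin (q + 2), depletedCount l (s ++ (List.ofFn v).take j) (v j)
        = depletedCount l s (v 0) *
          ∏ j : Fin (q + 1), depletedCount l (s' ++ (List.ofFn v').take j) (v' j) := by
      rw [Fin.prod_univ_succ]
      congr 1
      · simp
      · exact Finset.prod_congr rfl fun j _ => by rw [prefix_succ' s v j]
    rw [hprod, hlen]
    push_cast
    ring
end


/-- **Lemma 2 (true count algebra).** Let `W` be a finite type of weights,
`l : W → ℤ` a count function with `N = ∑ w, l w`. For `p, q ≥ 0` with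
`p + q ≤ N - 2`, a sequence `s = (w₁, …, w_p)` of elements of `W`, and
`v₀, …, v_q ∈ W`:
`∑_{w ∈ W} l^s(w) · ∏_{j=0}^{q} l^{s·(v₀,…,v_{j-1})·w}(v_j)
  = (N - p - q - 1) · ∏_{j=0}^{q} l^{s·(v₀,…,v_{j-1})}(v_j)`. -/
theorem true_count_algebra_lemma2 {W : Type*} [Fintype W] [DecidableEq W]
    (l : W → ℤ) (p q : ℕ) (s : List W) (hs : s.length = p)
    (hpq : (p : ℤ) + q + 2 ≤ ∑ w, l w) (v : Fin (q + 1) → W) :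
    ∑ w, depletedCount l s w *
        ∏ j : Fin (q + 1),
          depletedCount l (s ++ (List.ofFn v).take j ++ [w]) (v j)
      = ((∑ w, l w) - p - q - 1) *
          ∏ j : Fin (q + 1), depletedCount l (s ++ (List.ofFn v).take j) (v j) := by
  subst hs
  exact aux_main l q s v
end

section
/- Lemma 3 (true count algebra, removal of k cards): Let k ≥ 1 and 0 ≤ p ≤ N − k − 1, let s be a sequence of length p of elements of W, and let v₀ ∈ W. Then, as an identity of integers, ∑_{(i_1,…,i_k) ∈ W^k} [∏_{m=1}^{k} l^{s·(i_1,…,i_{m−1})}(i_m)] · l^{s·(i_1,…,i_k)}(v₀) = (N−p−1)(N−p−2)⋯(N−p−k) · l^s(v₀). -/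

private lemma tca_sum_count_univ {W : Type*} [Fintype W] [DecidableEq W] (s : List W) :
    ∑ j : W, (s.count j : ℤ) = s.length := by
  induction s with
  | nil => simp
  | cons a t ih =>
    simp only [List.count_cons, List.length_cons]
    push_cast
    rw [Finset.sum_add_distrib, ih]
    simp [add_comm]

private lemma tca_step {W : Type*} [Fintype W] [DecidableEq W] (l : W → ℤ) (s : List W) (v₀ : W) :
    ∑ j : W, depletedCount l s j * depletedCount l (s ++ [j]) v₀
      = ((∑ w, l w) - s.length - 1) * depletedCount l s v₀ := by
  have h : ∀ j : W, depletedCount l (s ++ [j]) v₀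
      = depletedCount l s v₀ - if j = v₀ then 1 else 0 := by
    intro j
    simp [depletedCount, List.count_append, List.count_singleton']
    by_cases hj : j = v₀ <;> simp [hj] <;> ring
  simp only [h, mul_sub]
  rw [Finset.sum_sub_distrib, ← Finset.sum_mul, ]
  have hsum : ∑ j : W, depletedCount l s j = (∑ w, l w) - s.length := by
    simp only [depletedCount]
    rw [Finset.sum_sub_distrib, tca_sum_count_univ]
  rw [hsum]
  have : ∑ j : W, depletedCount l s j * (if j = v₀ then 1 else 0)
      = depletedCount l s v₀ := by
    simp [mul_ite]
  rw [this]; ring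

private lemma tca_aux {W : Type*} [Fintype W] [DecidableEq W] (l : W → ℤ) (v₀ : W) :
    ∀ (k : ℕ) (s : List W),
    ∑ i : Fin k → W,
        (∏ m : Fin k, depletedCount l (s ++ (List.ofFn i).take m) (i m)) *
          depletedCount l (s ++ List.ofFn i) v₀
      = (∏ m : Fin k, ((∑ w, l w) - s.length - 1 - (m : ℕ))) * depletedCount l s v₀ := by
  intro k
  induction k with
  | zero => intro s; simp
  | succ k ih =>
    intro s
    rw [← Equiv.sum_comp (Fin.snocEquiv (fun _ : Fin (k+1) => W))
      (fun i => (∏ m : Fin (k+1), depletedCount l (s ++ (List.ofFn i).take m) (i m)) *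
          depletedCount l (s ++ List.ofFn i) v₀), Fintype.sum_prod_type]
    have key : ∀ (j : W) (g : Fin k → W),
        (∏ m : Fin (k+1), depletedCount l
            (s ++ (List.ofFn (Fin.snoc g j : Fin (k+1) → W)).take m)
            ((Fin.snoc g j : Fin (k+1) → W) m)) *
          depletedCount l (s ++ List.ofFn (Fin.snoc g j : Fin (k+1) → W)) v₀
        = (∏ m : Fin k, depletedCount l (s ++ (List.ofFn g).take m) (g m)) *
            (depletedCount l (s ++ List.ofFn g) j *
              depletedCount l ((s ++ List.ofFn g) ++ [j]) v₀) := by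
      intro j g
      have hofn : List.ofFn (Fin.snoc g j : Fin (k+1) → W) = List.ofFn g ++ [j] := by
        rw [List.ofFn_succ']
        simp [List.concat_eq_append]
      rw [hofn, Fin.prod_univ_castSucc]
      have h1 : ∀ m : Fin k, (List.ofFn g ++ [j]).take (m.castSucc : ℕ)
          = (List.ofFn g).take m := by
        intro m
        rw [List.take_append_of_le_length]
        · rfl
        · simp [Nat.le_of_lt m.2]
      have h2 : (List.ofFn g ++ [j]).take ((Fin.last k : Fin (k+1)) : ℕ) = List.ofFn g := by
        rw [List.take_append_of_le_length] <;> simp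
      simp only [Fin.snoc_castSucc, Fin.snoc_last, h1, h2, List.append_assoc]
      ring
    simp only [Fin.snocEquiv_apply]
    have hstep : ∀ g : Fin k → W,
        ∑ j : W, depletedCount l (s ++ List.ofFn g) j *
            depletedCount l ((s ++ List.ofFn g) ++ [j]) v₀
          = ((∑ w, l w) - s.length - 1 - k) * depletedCount l (s ++ List.ofFn g) v₀ := by
      intro g
      rw [tca_step l (s ++ List.ofFn g) v₀]
      push_cast [List.length_append, List.length_ofFn]
      ring_nf
    calc ∑ j : W, ∑ g : Fin k → W,
          (∏ m : Fin (k+1), depletedCount l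
              (s ++ (List.ofFn (Fin.snoc g j : Fin (k+1) → W)).take m)
              ((Fin.snoc g j : Fin (k+1) → W) m)) *
            depletedCount l (s ++ List.ofFn (Fin.snoc g j : Fin (k+1) → W)) v₀
        = ∑ g : Fin k → W,
            (∏ m : Fin k, depletedCount l (s ++ (List.ofFn g).take m) (g m)) *
              ∑ j : W, depletedCount l (s ++ List.ofFn g) j *
                depletedCount l ((s ++ List.ofFn g) ++ [j]) v₀ := by
          rw [Finset.sum_comm]
          refine Finset.sum_congr rfl fun g _ => ?_
          rw [Finset.mul_sum]
          exact Finset.sum_congr rfl fun j _ => key j g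
      _ = ((∑ w, l w) - s.length - 1 - k) *
            ∑ g : Fin k → W,
              (∏ m : Fin k, depletedCount l (s ++ (List.ofFn g).take m) (g m)) *
                depletedCount l (s ++ List.ofFn g) v₀ := by
          simp only [hstep, Finset.mul_sum]
          exact Finset.sum_congr rfl fun g _ => by ring
      _ = (∏ m : Fin (k+1), ((∑ w, l w) - s.length - 1 - (m : ℕ))) *
            depletedCount l s v₀ := by
          rw [ih s, Fin.prod_univ_castSucc]
          simp only [Fin.coe_castSucc, Fin.val_last]
          ring

/-- **Lemma 3 (true count algebra, removal of `k` cards).** Let `W` be a finite type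
of weights, `l : W → ℤ` a count function with `N = ∑ w, l w`. For `k ≥ 1`,
`0 ≤ p ≤ N - k - 1`, a sequence `s` of length `p`, and `v₀ ∈ W`:
`∑_{(i₁,…,i_k) ∈ W^k} [∏_{m=1}^{k} l^{s·(i₁,…,i_{m-1})}(i_m)] · l^{s·(i₁,…,i_k)}(v₀)
  = (N-p-1)(N-p-2)⋯(N-p-k) · l^s(v₀)`. -/
theorem true_count_algebra_lemma3 {W : Type*} [Fintype W] [DecidableEq W]
    (l : W → ℤ) (p k : ℕ) (s : List W) (hs : s.length = p) (hk : 1 ≤ k)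
    (hpk : (p : ℤ) + k + 1 ≤ ∑ w, l w) (v₀ : W) :
    ∑ i : Fin k → W,
        (∏ m : Fin k, depletedCount l (s ++ (List.ofFn i).take m) (i m)) *
          depletedCount l (s ++ List.ofFn i) v₀
      = (∏ m : Fin k, ((∑ w, l w) - p - 1 - (m : ℕ))) * depletedCount l s v₀ := by
  subst hs
  exact tca_aux l v₀ k s
end

section
/- Lemma 4 (true count algebra, general form): Let p ≥ 0, q ≥ 0 and k ≥ 1 with p + k + q ≤ N − 1, let s be a sequence of length p of elements of W, and let v₀,…,v_q ∈ W. Then, as an identity of integers, ∑_{(i_1,…,i_k) ∈ W^k} [∏_{m=1}^{k} l^{s·(i_1,…,i_{m−1})}(i_m)] · [∏_{j=0}^{q} l^{s·(i_1,…,i_k)·(v₀,…,v_{j−1})}(v_j)] = (N−p−q−1)(N−p−q−2)⋯(N−p−q−k) · ∏_{j=0}^{q} l^{s·(v₀,…,v_{j−1})}(v_j). -/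
/-!
The summand is `P_s(i·v)`, where `P_s(t) = ∏_j l^{s·(t_1,…,t_{j-1})}(t_j)` is the weight of
drawing the cards `t` in order after `s`, and `P_s(t·u) = P_s(t) · P_{s·t}(u)`. Swapping two
consecutive cards changes neither the weight `l^s(a) l^{s·a}(b) = l^s(b) l^{s·b}(a)` nor the
remaining deck, so `P_s(t)` only depends on the multiset of `t`. Hence a sum over a first
card equals a sum over a last card: `∑_w P_s(w·t) = ∑_w P_s(t) l^{s·t}(w) =
(N - |s| - |t|) P_s(t)`. Peeling off `i_1, …, i_k` this way gives the falling product.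
-/

section

variable {W : Type*} [DecidableEq W]

theorem depletedCount_perm (l : W → ℤ) {s s' : List W} (h : s.Perm s') :
    depletedCount l s = depletedCount l s' := by
  funext v
  simp only [depletedCount, h.count_eq]

theorem depletedCount_append_singleton (l : W → ℤ) (s : List W) (a v : W) :
    depletedCount l (s ++ [a]) v = depletedCount l s v - if a = v then 1 else 0 := by
  simp only [depletedCount, List.count_append, List.count_singleton, beq_iff_eq]
  split_ifs <;> push_cast <;> ring

/-- `P_s(t)` above. -/
def drawCount (l : W → ℤ) : List W → List W → ℤ
  | _, [] => 1
  | s, v :: t => depletedCount l s v * drawCount l (s ++ [v]) t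

@[simp]
theorem drawCount_nil (l : W → ℤ) (s : List W) : drawCount l s [] = 1 := rfl

theorem drawCount_cons (l : W → ℤ) (s : List W) (v : W) (t : List W) :
    drawCount l s (v :: t) = depletedCount l s v * drawCount l (s ++ [v]) t := rfl

theorem drawCount_append (l : W → ℤ) (s t u : List W) :
    drawCount l s (t ++ u) = drawCount l s t * drawCount l (s ++ t) u := by
  induction t generalizing s with
  | nil => simp
  | cons v t ih => simp [drawCount_cons, ih, mul_assoc]

theorem drawCount_perm_left (l : W → ℤ) {s s' : List W} (h : s.Perm s') (t : List W) :
    drawCount l s t = drawCount l s' t := by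
  induction t generalizing s s' with
  | nil => rfl
  | cons v t ih =>
    rw [drawCount_cons, drawCount_cons, depletedCount_perm l h,
      ih (h.append_right [v])]

theorem drawCount_swap (l : W → ℤ) (s : List W) (a b : W) (t : List W) :
    drawCount l s (a :: b :: t) = drawCount l s (b :: a :: t) := by
  have hdeck : (s ++ [a] ++ [b]).Perm (s ++ [b] ++ [a]) := by
    simpa using (List.Perm.swap b a []).append_left s
  simp only [drawCount_cons, drawCount_perm_left l hdeck, ← mul_assoc]
  congr 1
  rw [depletedCount_append_singleton, depletedCount_append_singleton]
  by_cases hab : a = b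
  · subst hab; rfl
  · simp only [hab, Ne.symm hab, if_false, sub_zero, mul_comm]

theorem drawCount_perm (l : W → ℤ) (s : List W) {t t' : List W} (h : t.Perm t') :
    drawCount l s t = drawCount l s t' := by
  induction h generalizing s with
  | nil => rfl
  | cons v _ ih => rw [drawCount_cons, drawCount_cons, ih]
  | swap a b t => exact drawCount_swap l s b a t
  | trans _ _ ih₁ ih₂ => exact (ih₁ s).trans (ih₂ s)

theorem prod_depletedCount_take_ofFn (l : W → ℤ) {k : ℕ} (s : List W) (i : Fin k → W) :
    ∏ m : Fin k, depletedCount l (s ++ (List.ofFn i).take m) (i m)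
      = drawCount l s (List.ofFn i) := by
  induction k generalizing s with
  | zero => simp
  | succ k ih =>
    rw [Fin.prod_univ_succ, List.ofFn_succ, drawCount_cons, ← ih (s ++ [i 0])]
    simp [List.take_succ_cons]

variable [Fintype W]

theorem sum_depletedCount (l : W → ℤ) (s : List W) :
    ∑ v, depletedCount l s v = ∑ v, l v - s.length := by
  have hcount : ∑ v, (s.count v : ℤ) = s.length := by
    have := Multiset.sum_count_eq_card (s := Finset.univ) (m := (s : Multiset W))
      fun a _ => Finset.mem_univ a
    simp only [Multiset.coe_count, Multiset.coe_card] at this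
    exact_mod_cast this
  simp only [depletedCount, Finset.sum_sub_distrib, hcount]

theorem sum_drawCount_cons (l : W → ℤ) (s t : List W) :
    ∑ w, drawCount l s (w :: t) = (∑ v, l v - s.length - t.length) * drawCount l s t := by
  calc ∑ w, drawCount l s (w :: t)
      = ∑ w, drawCount l s t * depletedCount l (s ++ t) w := by
        refine Finset.sum_congr rfl fun w _ => ?_
        rw [drawCount_perm l s (List.perm_append_singleton w t).symm, drawCount_append,
          drawCount_cons, drawCount_nil, mul_one]
    _ = (∑ v, l v - s.length - t.length) * drawCount l s t := by
        rw [← Finset.mul_sum, sum_depletedCount, List.length_append]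
        push_cast
        ring

theorem sum_drawCount_ofFn_append (l : W → ℤ) (k : ℕ) (s t : List W) :
    ∑ i : Fin k → W, drawCount l s (List.ofFn i ++ t)
      = (∏ m : Fin k, (∑ v, l v - s.length - t.length - (m : ℕ))) * drawCount l s t := by
  induction k generalizing t with
  | zero => simp
  | succ k ih =>
    calc ∑ i : Fin (k + 1) → W, drawCount l s (List.ofFn i ++ t)
        = ∑ w, ∑ i : Fin k → W, drawCount l s (List.ofFn i ++ w :: t) := by
          rw [← (Fin.consEquiv fun _ => W).sum_comp, Fintype.sum_prod_type]
          refine Finset.sum_congr rfl fun w _ => Finset.sum_congr rfl fun i _ => ?_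
          refine drawCount_perm l s ?_
          simpa [Fin.consEquiv, List.ofFn_succ] using List.perm_middle.symm
      _ = (∏ m : Fin k, (∑ v, l v - s.length - (t.length + 1) - (m : ℕ)))
            * ∑ w, drawCount l s (w :: t) := by
          simp only [ih, List.length_cons, Nat.cast_add, Nat.cast_one, Finset.mul_sum]
      _ = (∏ m : Fin (k + 1), (∑ v, l v - s.length - t.length - (m : ℕ)))
            * drawCount l s t := by
          rw [sum_drawCount_cons, Fin.prod_univ_succ]
          simp only [Fin.val_zero, Fin.val_succ, Nat.cast_zero, Nat.cast_add, Nat.cast_one]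
          ring_nf

end

theorem true_count_algebra_lemma4_general {W : Type*} [Fintype W] [DecidableEq W]
    (l : W → ℤ) (p q k : ℕ) (s : List W) (hs : s.length = p) (v : Fin (q + 1) → W) :
    ∑ i : Fin k → W,
        (∏ m : Fin k, depletedCount l (s ++ (List.ofFn i).take m) (i m)) *
          ∏ j : Fin (q + 1),
            depletedCount l (s ++ List.ofFn i ++ (List.ofFn v).take j) (v j)
      = (∏ m : Fin k, ((∑ w, l w) - p - q - 1 - (m : ℕ))) *
          ∏ j : Fin (q + 1), depletedCount l (s ++ (List.ofFn v).take j) (v j) := by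
  simp only [prod_depletedCount_take_ofFn, ← drawCount_append, sum_drawCount_ofFn_append,
    hs, List.length_ofFn]
  push_cast
  ring_nf

/-- **Lemma 4 (true count algebra, general form).** Let `W` be a finite type of
weights, `l : W → ℤ` a count function with `N = ∑ w, l w`. For `p, q ≥ 0`, `k ≥ 1`
with `p + k + q ≤ N - 1`, a sequence `s` of length `p`, and `v₀, …, v_q ∈ W`:
`∑_{(i₁,…,i_k) ∈ W^k} [∏_{m=1}^{k} l^{s·(i₁,…,i_{m-1})}(i_m)]
    · [∏_{j=0}^{q} l^{s·(i₁,…,i_k)·(v₀,…,v_{j-1})}(v_j)]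
  = (N-p-q-1)(N-p-q-2)⋯(N-p-q-k) · ∏_{j=0}^{q} l^{s·(v₀,…,v_{j-1})}(v_j)`. -/
theorem true_count_algebra_lemma4 {W : Type*} [Fintype W] [DecidableEq W]
    (l : W → ℤ) (p q k : ℕ) (s : List W) (hs : s.length = p) (hk : 1 ≤ k)
    (hpqk : (p : ℤ) + k + q ≤ (∑ w, l w) - 1) (v : Fin (q + 1) → W) :
    ∑ i : Fin k → W,
        (∏ m : Fin k, depletedCount l (s ++ (List.ofFn i).take m) (i m)) *
          ∏ j : Fin (q + 1),
            depletedCount l (s ++ List.ofFn i ++ (List.ofFn v).take j) (v j)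
      = (∏ m : Fin k, ((∑ w, l w) - p - q - 1 - (m : ℕ))) *
          ∏ j : Fin (q + 1), depletedCount l (s ++ (List.ofFn v).take j) (v j) :=
  true_count_algebra_lemma4_general l p q k s hs v
end

section
/- Lemma 6: Let R, w_1, …, w_n be real numbers and let N, n be natural numbers with N ≠ 0, N ≠ 1 and N ≠ n. Then (R + w_1 + ⋯ + w_n)/(N−n) − R/N = ((N−1)/(N−n)) · ∑_{i=1}^{n} ( (R + w_i)/(N−1) − R/N ). -/
/-- **Lemma 6.** Let `R, w₁, …, w_n` be real numbers (the running count of a deck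
of `N` cards and the weights of `n` removed cards) and `N, n` naturals with
`N ≠ 0`, `N ≠ 1`, `N ≠ n`. Then
`(R + w₁ + ⋯ + w_n)/(N-n) - R/N = ((N-1)/(N-n)) · ∑_{i=1}^{n} ((R + w i)/(N-1) - R/N)`. -/
theorem true_count_lemma6 (R : ℝ) (N n : ℕ) (w : Fin n → ℝ)
    (hN0 : N ≠ 0) (hN1 : N ≠ 1) (hNn : N ≠ n) :
    (R + ∑ i, w i) / ((N : ℝ) - (n : ℝ)) - R / (N : ℝ)
      = (((N : ℝ) - 1) / ((N : ℝ) - (n : ℝ))) *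
          ∑ i, ((R + w i) / ((N : ℝ) - 1) - R / (N : ℝ)) := by
  have h0 : (N : ℝ) ≠ 0 := Nat.cast_ne_zero.mpr hN0
  have h1 : (N : ℝ) - 1 ≠ 0 := by
    intro h
    exact hN1 (by exact_mod_cast sub_eq_zero.mp h)
  have hn : (N : ℝ) - (n : ℝ) ≠ 0 := by
    intro h
    exact hNn (by exact_mod_cast sub_eq_zero.mp h)
  simp only [Finset.sum_sub_distrib, ← Finset.sum_div, Finset.sum_add_distrib,
    Finset.sum_const, Finset.card_univ, Fintype.card_fin, nsmul_eq_mul]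
  field_simp
  ring
end

section
/- Theorem 3.4 (first-order variance coefficient for fuzzy advantage): For every p ∈ (0,1), h₂″(p)/2 − h(p)·h″(p) = (1/(p(1−p))) · ( 1 − (2p−1)·log(p/(1−p)) ), where h(p) = p·log(2p) + (1−p)·log(2−2p) and h₂(p) = p·(log(2p))² + (1−p)·(log(2−2p))². (This quantity is the coefficient of Var(p₀(x)) in the first-order expansion Var(G₁) = p(1−p)(log(p/(1−p)))² + (h₂″(p)/2 − h(p)h″(p))·Var(p₀(x)) + … of the variance of the exponential rate of growth under Kelly betting with fuzzy advantage.) -/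
/-- `h(p) = p·log(2p) + (1-p)·log(2-2p)`, the expected one-round log-growth under
Kelly betting at winning probability `p`. -/
noncomputable def kellyH (p : ℝ) : ℝ :=
  p * Real.log (2 * p) + (1 - p) * Real.log (2 - 2 * p)

/-- `h₂(p) = p·(log(2p))² + (1-p)·(log(2-2p))²`, the second moment of the one-round
log-growth under Kelly betting at winning probability `p`. -/
noncomputable def kellyH2 (p : ℝ) : ℝ :=
  p * (Real.log (2 * p))^2 + (1 - p) * (Real.log (2 - 2 * p))^2

/-!
Write `a = log(2p)` and `b = log(2-2p)`, so that `a' = 1/p` and `b' = -1/(1-p)`. Then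
`h'' = 1/(p(1-p))` and `h₂''/2 = (a+1)/p + (b+1)/(1-p)`, while
`h·h'' = a/(1-p) + b/p`; the difference is `(1 - (2p-1)(a-b))/(p(1-p))`, and
`a - b = log(p/(1-p))`.
-/

open Real Filter Topology

theorem deriv_deriv_eq_of_eventually_hasDerivAt {𝕜 F : Type*} [NontriviallyNormedField 𝕜]
    [NormedAddCommGroup F] [NormedSpace 𝕜 F] {f g : 𝕜 → F} {x : 𝕜} {c : F}
    (hf : ∀ᶠ y in 𝓝 x, HasDerivAt f (g y) y) (hg : HasDerivAt g c x) :
    deriv (deriv f) x = c :=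
  (EventuallyEq.deriv_eq (hf.mono fun _ hy => hy.deriv)).trans hg.deriv

section

variable {x : ℝ}

theorem hasDerivAt_log_two_mul (hx : x ≠ 0) :
    HasDerivAt (fun y => log (2 * y)) x⁻¹ x := by
  refine (((hasDerivAt_id' x).const_mul 2).log (by simpa using hx)).congr_deriv ?_
  field_simp

theorem two_sub_two_mul_ne_zero (hx : x ≠ 1) : 2 - 2 * x ≠ 0 := by
  rw [← mul_one_sub]
  exact mul_ne_zero two_ne_zero (sub_ne_zero_of_ne hx.symm)

theorem hasDerivAt_log_two_sub_two_mul (hx : x ≠ 1) :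
    HasDerivAt (fun y => log (2 - 2 * y)) (-(1 - x)⁻¹) x := by
  refine ((((hasDerivAt_id' x).const_mul 2).const_sub 2).log
    (two_sub_two_mul_ne_zero hx)).congr_deriv ?_
  field_simp

theorem log_two_mul_sub_log_two_sub_two_mul (hx0 : x ≠ 0) (hx1 : x ≠ 1) :
    log (2 * x) - log (2 - 2 * x) = log (x / (1 - x)) := by
  rw [← log_div (mul_ne_zero two_ne_zero hx0) (two_sub_two_mul_ne_zero hx1)]
  congr 1
  field_simp

theorem hasDerivAt_kellyH (hx0 : x ≠ 0) (hx1 : x ≠ 1) :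
    HasDerivAt kellyH (log (2 * x) - log (2 - 2 * x)) x := by
  refine (((hasDerivAt_id' x).mul (hasDerivAt_log_two_mul hx0)).add
    (((hasDerivAt_id' x).const_sub 1).mul (hasDerivAt_log_two_sub_two_mul hx1))).congr_deriv ?_
  field_simp
  ring

theorem hasDerivAt_kellyH2 (hx0 : x ≠ 0) (hx1 : x ≠ 1) :
    HasDerivAt kellyH2
      (log (2 * x) ^ 2 + 2 * log (2 * x) - log (2 - 2 * x) ^ 2 - 2 * log (2 - 2 * x)) x := by
  refine (((hasDerivAt_id' x).mul ((hasDerivAt_log_two_mul hx0).pow 2)).add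
    (((hasDerivAt_id' x).const_sub 1).mul
      ((hasDerivAt_log_two_sub_two_mul hx1).pow 2))).congr_deriv ?_
  simp only [Pi.pow_apply]
  field_simp
  ring

theorem deriv_deriv_kellyH (hx0 : x ≠ 0) (hx1 : x ≠ 1) :
    deriv (deriv kellyH) x = x⁻¹ + (1 - x)⁻¹ := by
  refine deriv_deriv_eq_of_eventually_hasDerivAt
    (((eventually_ne_nhds hx0).and (eventually_ne_nhds hx1)).mono fun _ hy =>
      hasDerivAt_kellyH hy.1 hy.2) ?_
  exact ((hasDerivAt_log_two_mul hx0).sub (hasDerivAt_log_two_sub_two_mul hx1)).congr_deriv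
    (by ring)

theorem deriv_deriv_kellyH2 (hx0 : x ≠ 0) (hx1 : x ≠ 1) :
    deriv (deriv kellyH2) x
      = 2 * ((log (2 * x) + 1) * x⁻¹ + (log (2 - 2 * x) + 1) * (1 - x)⁻¹) := by
  refine deriv_deriv_eq_of_eventually_hasDerivAt
    (((eventually_ne_nhds hx0).and (eventually_ne_nhds hx1)).mono fun _ hy =>
      hasDerivAt_kellyH2 hy.1 hy.2) ?_
  have ha := hasDerivAt_log_two_mul hx0
  have hb := hasDerivAt_log_two_sub_two_mul hx1
  exact ((((ha.pow 2).add (ha.const_mul 2)).sub (hb.pow 2)).sub (hb.const_mul 2)).congr_deriv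
    (by push_cast; ring)

end

/-- **Theorem 3.4 (first-order variance coefficient for fuzzy advantage).** For
every `p ∈ (0,1)`,
`h₂″(p)/2 - h(p)·h″(p) = (1/(p(1-p)))·(1 - (2p-1)·log(p/(1-p)))`.
This quantity is the coefficient of `Var(p₀(x))` in the first-order expansion of
the variance of the exponential rate of growth under Kelly betting with fuzzy
advantage:
`Var(G₁) = p(1-p)(log(p/(1-p)))² + (h₂″(p)/2 - h(p)h″(p))·Var(p₀(x)) + …`. -/
theorem kelly_fuzzy_variance_coeff (p : ℝ) (hp0 : 0 < p) (hp1 : p < 1) :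
    deriv (deriv kellyH2) p / 2 - kellyH p * deriv (deriv kellyH) p
      = (1 / (p * (1 - p))) * (1 - (2 * p - 1) * Real.log (p / (1 - p))) := by
  have hp0' : p ≠ 0 := hp0.ne'
  have hp1' : p ≠ 1 := hp1.ne
  rw [deriv_deriv_kellyH2 hp0' hp1', deriv_deriv_kellyH hp0' hp1', kellyH,
    ← log_two_mul_sub_log_two_sub_two_mul hp0' hp1']
  field_simp
  ring
end
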